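/- Let K ⊂ E be a compact product with equilibrium state μ and let φ be a Hausdorff function with 0 < D̄ := limsup_{ε→0} μ(B(x,ε))/φ(ε) < ∞. Then for every ball B ⊂ K of radius r > 0, H^φ(B) = H^φ(K) · μ(B). -/

import Mathlib

open scoped Classical ENNReal
open Filter Topology MeasureTheory

/-- The minimal index (counting from 1) at which two elements of the compact product
`K = ∏_k {1,…,n k}` differ. -/
noncomputable def chiK {n : ℕ → ℕ} (x y : ∀ k, Fin (n k)) : ℕ := sInf {k | x k ≠ y k} + 1

/-- The ultrametric `δ(x,y) = 2^{-χ(x,y)}` on the compact product. -/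
noncomputable def deltaK {n : ℕ → ℕ} (x y : ∀ k, Fin (n k)) : ℝ :=
  if x = y then 0 else (2 : ℝ) ^ (-(chiK x y : ℤ))

/-- The open `δ`-ball of center `x` and radius `ε`. -/
def BallK {n : ℕ → ℕ} (x : ∀ k, Fin (n k)) (ε : ℝ) : Set (∀ k, Fin (n k)) :=
  {y | deltaK x y < ε}

/-- The equilibrium state: the product of the uniform probability measures, characterized
by its values on cylinders. -/
def IsEquilibrium {n : ℕ → ℕ} (μ : Measure (∀ k, Fin (n k))) : Prop :=
  ∀ (k : ℕ) (s : ∀ j, Fin (n j)),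
    μ {y | ∀ j < k, y j = s j} = ∏ j ∈ Finset.range k, ((n j : ℝ≥0∞))⁻¹

/-- Hausdorff functions: continuous nondecreasing, vanishing exactly at `0`. -/
def IsHausdorffFn (φ : ℝ → ℝ) : Prop :=
  ContinuousOn φ (Set.Ici 0) ∧ MonotoneOn φ (Set.Ici 0) ∧ φ 0 = 0 ∧ ∀ ε > 0, 0 < φ ε

/-- The upper `φ`-density of `μ` at `x`. -/
noncomputable def upperDensK {n : ℕ → ℕ} (μ : Measure (∀ k, Fin (n k))) (φ : ℝ → ℝ)
    (x : ∀ k, Fin (n k)) : ℝ≥0∞ :=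
  Filter.limsup (fun ε : ℝ => μ (BallK x ε) / ENNReal.ofReal (φ ε)) (𝓝[>] 0)

/-- The lower `φ`-density of `μ` at `x`. -/
noncomputable def lowerDensK {n : ℕ → ℕ} (μ : Measure (∀ k, Fin (n k))) (φ : ℝ → ℝ)
    (x : ∀ k, Fin (n k)) : ℝ≥0∞ :=
  Filter.liminf (fun ε : ℝ => μ (BallK x ε) / ENNReal.ofReal (φ ε)) (𝓝[>] 0)

/-- The `φ`-Hausdorff measure on the compact product, defined via countable covers by
open balls of radii at most `ε`, letting `ε → 0`. -/
noncomputable def HK {n : ℕ → ℕ} (φ : ℝ → ℝ) (S : Set (∀ k, Fin (n k))) : ℝ≥0∞ :=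
  ⨆ (ε : ℝ) (_ : 0 < ε),
    ⨅ (c : ℕ → (∀ k, Fin (n k)) × ℝ)
      (_ : (∀ i, 0 ≤ (c i).2 ∧ (c i).2 ≤ ε) ∧ S ⊆ ⋃ i, BallK (c i).1 (c i).2),
      ∑' i, ENNReal.ofReal (φ (c i).2)

/-- The `φ`-packing premeasure on the compact product, defined via countable packs by
disjoint open balls centered in the set, of radii at most `ε`, letting `ε → 0`. -/
noncomputable def PK0 {n : ℕ → ℕ} (φ : ℝ → ℝ) (S : Set (∀ k, Fin (n k))) : ℝ≥0∞ :=
  ⨅ (ε : ℝ) (_ : 0 < ε),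
    ⨆ (c : ℕ → (∀ k, Fin (n k)) × ℝ)
      (_ : (∀ i, (c i).1 ∈ S ∧ 0 ≤ (c i).2 ∧ (c i).2 ≤ ε) ∧
        Pairwise fun i j => Disjoint (BallK (c i).1 (c i).2) (BallK (c j).1 (c j).2)),
      ∑' i, ENNReal.ofReal (φ (c i).2)

/-- The `φ`-packing measure on the compact product. -/
noncomputable def PK {n : ℕ → ℕ} (φ : ℝ → ℝ) (S : Set (∀ k, Fin (n k))) : ℝ≥0∞ :=
  ⨅ (F : ℕ → Set (∀ k, Fin (n k))) (_ : S ⊆ ⋃ m, F m), ∑' m, PK0 φ (F m)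

/-!
Every ball of positive radius is a cylinder `{y | y j = x j for j < k}`. Below scale `2^{-k}`,
overwriting the first `k` coordinates is an isometry, so a cover of one cylinder of depth `k`
moves to a cover of each of the `∏_{j<k} n j` cylinders of that depth, and conversely a cover of
`K` splits into covers of these cylinders that all move into a single one. Hence
`H^φ(K) = (∏_{j<k} n j) · H^φ(cylinder)`, while the equilibrium state gives the cylinder
mass `(∏_{j<k} n j)⁻¹`.
-/

namespace CompactProduct

variable {n : ℕ → ℕ}

def cylSet (x : ∀ k, Fin (n k)) (k : ℕ) : Set (∀ k, Fin (n k)) := {y | ∀ j < k, y j = x j}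

def prefixK (k : ℕ) (y : ∀ k, Fin (n k)) : ∀ j : Fin k, Fin (n j) := fun j => y j

def prefixReplace {k : ℕ} (s : ∀ j : Fin k, Fin (n j)) (y : ∀ k, Fin (n k)) :
    ∀ k, Fin (n k) :=
  fun j => if h : j < k then s ⟨j, h⟩ else y j

section Prefix

variable {k : ℕ}

@[simp]
lemma prefixK_prefixReplace (s : ∀ j : Fin k, Fin (n j)) (y : ∀ k, Fin (n k)) :
    prefixK k (prefixReplace s y) = s := by
  funext j
  simp [prefixK, prefixReplace]

@[simp]
lemma prefixReplace_prefixReplace (s t : ∀ j : Fin k, Fin (n j)) (y : ∀ k, Fin (n k)) :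
    prefixReplace s (prefixReplace t y) = prefixReplace s y := by
  funext j
  by_cases h : j < k <;> simp [prefixReplace, h]

@[simp]
lemma prefixReplace_prefixK_self (y : ∀ k, Fin (n k)) : prefixReplace (prefixK k y) y = y := by
  funext j
  by_cases h : j < k <;> simp [prefixReplace, prefixK, h]

lemma mem_cylSet_iff_prefixK_eq {x y : ∀ k, Fin (n k)} :
    y ∈ cylSet x k ↔ prefixK k y = prefixK k x := by
  simp only [cylSet, Set.mem_ofPred_eq, prefixK, funext_iff, Fin.forall_iff]

lemma prefixReplace_mem_cylSet (x y : ∀ k, Fin (n k)) :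
    prefixReplace (prefixK k x) y ∈ cylSet x k := by
  simp [mem_cylSet_iff_prefixK_eq]

lemma card_prefix_ne_zero (x : ∀ k, Fin (n k)) (k : ℕ) :
    (Fintype.card (∀ j : Fin k, Fin (n j)) : ℝ≥0∞) ≠ 0 := by
  have : Nonempty (∀ j : Fin k, Fin (n j)) := ⟨prefixK k x⟩
  exact_mod_cast Fintype.card_ne_zero

end Prefix

section Ultrametric

lemma deltaK_eq_of_setOf_ne_eq {x y x' y' : ∀ k, Fin (n k)}
    (h : {j | x j ≠ y j} = {j | x' j ≠ y' j}) : deltaK x y = deltaK x' y' := by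
  have hxy : x = y ↔ x' = y' := by
    simpa [Set.eq_empty_iff_forall_notMem, funext_iff] using congrArg (· = ∅) h
  simp only [deltaK, chiK, h, hxy]

lemma forall_lt_eq_iff_le_sInf {x y : ∀ k, Fin (n k)} (h : x ≠ y) (k : ℕ) :
    (∀ j < k, y j = x j) ↔ k ≤ sInf {j | x j ≠ y j} := by
  have hne : {j | x j ≠ y j}.Nonempty := by
    by_contra hc
    exact h (funext fun j => not_not.1 fun hj => hc ⟨j, hj⟩)
  constructor
  · intro hk
    by_contra hlt
    exact Nat.sInf_mem hne (hk _ (not_le.1 hlt)).symm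
  · intro hk j hj
    by_contra hne'
    have := Nat.sInf_le (show j ∈ {j | x j ≠ y j} from Ne.symm hne')
    omega

lemma mem_BallK_iff_of_ne {x y : ∀ k, Fin (n k)} (h : x ≠ y) (r : ℝ) :
    y ∈ BallK x r ↔ (2 : ℝ) ^ (-((sInf {j | x j ≠ y j} : ℕ) + 1 : ℤ)) < r := by
  simp [BallK, deltaK, chiK, h]

lemma zpow_neg_lt_zpow_neg_iff {a b : ℕ} :
    (2 : ℝ) ^ (-((a : ℤ) + 1)) < (2 : ℝ) ^ (-(b : ℤ)) ↔ b ≤ a := by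
  rw [zpow_lt_zpow_iff_right₀ (by norm_num)]
  omega

lemma BallK_subset_cylSet (c : ∀ k, Fin (n k)) {r : ℝ} {k : ℕ}
    (hr : r ≤ (2 : ℝ) ^ (-(k : ℤ))) : BallK c r ⊆ cylSet c k := by
  intro y hy
  rcases eq_or_ne c y with rfl | h
  · exact fun _ _ => rfl
  · rw [mem_BallK_iff_of_ne h] at hy
    exact (forall_lt_eq_iff_le_sInf h k).2
      (zpow_neg_lt_zpow_neg_iff.1 (hy.trans_le hr))

lemma prefixReplace_mem_BallK {k : ℕ} (s : ∀ j : Fin k, Fin (n j)) {c y : ∀ k, Fin (n k)}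
    {r : ℝ} (hr : r ≤ (2 : ℝ) ^ (-(k : ℤ))) (hy : y ∈ BallK c r) :
    prefixReplace s y ∈ BallK (prefixReplace s c) r := by
  have hyc := BallK_subset_cylSet c hr hy
  have hset : {j | prefixReplace s c j ≠ prefixReplace s y j} = {j | c j ≠ y j} := by
    ext j
    by_cases h : j < k <;> simp [prefixReplace, h, hyc j]
  simpa only [BallK, Set.mem_ofPred_eq, deltaK_eq_of_setOf_ne_eq hset] using hy

lemma exists_nat_forall_zpow_lt_iff {r : ℝ} (hr : 0 < r) :
    ∃ k : ℕ, ∀ m : ℕ, (2 : ℝ) ^ (-((m : ℤ) + 1)) < r ↔ k ≤ m := by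
  have hex : ∃ m : ℕ, (2 : ℝ) ^ (-((m : ℤ) + 1)) < r := by
    obtain ⟨m, hm⟩ := exists_pow_lt_of_lt_one hr (by norm_num : (1 : ℝ) / 2 < 1)
    refine ⟨m, lt_of_le_of_lt ?_ hm⟩
    rw [one_div, inv_pow, ← zpow_natCast, ← zpow_neg]
    exact zpow_le_zpow_right₀ (by norm_num) (by omega)
  refine ⟨Nat.find hex, fun m => ⟨Nat.find_min' hex, fun hm => ?_⟩⟩
  refine lt_of_le_of_lt ?_ (Nat.find_spec hex)
  exact zpow_le_zpow_right₀ (by norm_num) (by omega)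

lemma exists_BallK_eq_cylSet (x : ∀ k, Fin (n k)) {r : ℝ} (hr : 0 < r) :
    ∃ k, BallK x r = cylSet x k := by
  obtain ⟨k, hk⟩ := exists_nat_forall_zpow_lt_iff hr
  refine ⟨k, Set.ext fun y => ?_⟩
  rcases eq_or_ne x y with rfl | h
  · simp [BallK, deltaK, cylSet, hr]
  · rw [mem_BallK_iff_of_ne h, hk]
    exact (forall_lt_eq_iff_le_sInf h k).symm

end Ultrametric

section HausdorffContent

variable (φ : ℝ → ℝ)

noncomputable def HKContent (ε : ℝ) (S : Set (∀ k, Fin (n k))) : ℝ≥0∞ :=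
  ⨅ (c : ℕ → (∀ k, Fin (n k)) × ℝ)
    (_ : (∀ i, 0 ≤ (c i).2 ∧ (c i).2 ≤ ε) ∧ S ⊆ ⋃ i, BallK (c i).1 (c i).2),
    ∑' i, ENNReal.ofReal (φ (c i).2)

lemma HKContent_anti (S : Set (∀ k, Fin (n k))) {ε ε' : ℝ} (h : ε' ≤ ε) :
    HKContent φ ε S ≤ HKContent φ ε' S :=
  le_iInf₂ fun c hc => iInf₂_le c ⟨fun i => ⟨(hc.1 i).1, (hc.1 i).2.trans h⟩, hc.2⟩

lemma HK_eq_iSup_HKContent (S : Set (∀ k, Fin (n k))) {t : ℝ} (ht : 0 < t) :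
    HK φ S = ⨆ (ε : ℝ) (_ : 0 < ε ∧ ε ≤ t), HKContent φ ε S := by
  refine le_antisymm (iSup₂_le fun ε hε => ?_)
    (iSup₂_le fun ε hε => le_iSup₂_of_le ε hε.1 le_rfl)
  exact le_iSup₂_of_le (min ε t) ⟨lt_min hε ht, min_le_right ε t⟩
    (HKContent_anti φ S (min_le_left ε t))

variable {k : ℕ} {ε : ℝ}

lemma HKContent_univ_le (x : ∀ k, Fin (n k)) (hε : ε ≤ (2 : ℝ) ^ (-(k : ℤ))) :
    HKContent φ ε (Set.univ : Set (∀ k, Fin (n k))) ≤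
      Fintype.card (∀ j : Fin k, Fin (n j)) * HKContent φ ε (cylSet x k) := by
  have : Nonempty (∀ j : Fin k, Fin (n j)) := ⟨prefixK k x⟩
  simp_rw [HKContent,
    ENNReal.mul_iInf_of_ne (card_prefix_ne_zero x k) (ENNReal.natCast_ne_top _)]
  refine le_iInf₂ fun c hc => ?_
  obtain ⟨e⟩ := nonempty_equiv_of_countable (α := ℕ) (β := ℕ × ∀ j : Fin k, Fin (n j))
  let C : ℕ → (∀ k, Fin (n k)) × ℝ := fun i =>
    (prefixReplace (e i).2 (c (e i).1).1, (c (e i).1).2)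
  have hC : Set.univ ⊆ ⋃ i, BallK (C i).1 (C i).2 := by
    intro y _
    obtain ⟨q, hq⟩ := Set.mem_iUnion.1 (hc.2 (prefixReplace_mem_cylSet x y))
    refine Set.mem_iUnion.2 ⟨e.symm (q, prefixK k y), ?_⟩
    simpa [C] using prefixReplace_mem_BallK (prefixK k y) ((hc.1 q).2.trans hε) hq
  calc _ ≤ ∑' i, ENNReal.ofReal (φ (C i).2) := iInf₂_le C ⟨fun i => hc.1 _, hC⟩
    _ = ∑' p : ℕ × (∀ j : Fin k, Fin (n j)), ENNReal.ofReal (φ (c p.1).2) :=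
        e.tsum_eq (fun p => ENNReal.ofReal (φ (c p.1).2))
    _ = _ := by
        rw [ENNReal.tsum_prod (f := fun q _ => ENNReal.ofReal (φ (c q).2)),
          ← ENNReal.tsum_mul_left]
        simp [tsum_fintype]

lemma card_mul_HKContent_le (hφ0 : φ 0 = 0) (x : ∀ k, Fin (n k)) (hε0 : 0 ≤ ε)
    (hε : ε ≤ (2 : ℝ) ^ (-(k : ℤ))) :
    Fintype.card (∀ j : Fin k, Fin (n j)) * HKContent φ ε (cylSet x k) ≤
      HKContent φ ε (Set.univ : Set (∀ k, Fin (n k))) := by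
  refine le_iInf₂ fun c hc => ?_
  -- the part of the cover centered in the `s`-th cylinder, moved into `cylSet x k`;
  -- the other balls are shrunk to radius `0`
  let C (s : ∀ j : Fin k, Fin (n j)) : ℕ → (∀ k, Fin (n k)) × ℝ := fun i =>
    (prefixReplace (prefixK k x) (c i).1, if prefixK k (c i).1 = s then (c i).2 else 0)
  have hC : ∀ s, HKContent φ ε (cylSet x k) ≤ ∑' i, ENNReal.ofReal (φ (C s i).2) := by
    refine fun s => iInf₂_le (C s) ⟨fun i => ?_, fun y hy => ?_⟩
    · by_cases h : prefixK k (c i).1 = s <;> simp [C, h, hc.1 i, hε0]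
    · obtain ⟨i, hi⟩ := Set.mem_iUnion.1 (hc.2 (Set.mem_univ (prefixReplace s y)))
      have hs : prefixK k (c i).1 = s := by
        have hi' := BallK_subset_cylSet _ ((hc.1 i).2.trans hε) hi
        simpa using (mem_cylSet_iff_prefixK_eq.1 hi').symm
      have hy' : prefixReplace (prefixK k x) y = y := by
        rw [← mem_cylSet_iff_prefixK_eq.1 hy, prefixReplace_prefixK_self]
      refine Set.mem_iUnion.2 ⟨i, ?_⟩
      simpa [C, hs, hy'] using prefixReplace_mem_BallK (prefixK k x) ((hc.1 i).2.trans hε) hi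
  have hsum : ∀ i, ∑ s, ENNReal.ofReal (φ (C s i).2) = ENNReal.ofReal (φ (c i).2) := by
    intro i
    simp only [C, apply_ite φ, hφ0, apply_ite ENNReal.ofReal, ENNReal.ofReal_zero]
    simp
  calc (Fintype.card (∀ j : Fin k, Fin (n j)) : ℝ≥0∞) * HKContent φ ε (cylSet x k)
      = ∑ _s : ∀ j : Fin k, Fin (n j), HKContent φ ε (cylSet x k) := by simp
    _ ≤ ∑ s, ∑' i, ENNReal.ofReal (φ (C s i).2) := Finset.sum_le_sum fun s _ => hC s
    _ = ∑' i, ENNReal.ofReal (φ (c i).2) := by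
        rw [← Summable.tsum_finsetSum fun _ _ => ENNReal.summable]
        exact tsum_congr hsum

lemma HK_univ_eq_card_mul (hφ0 : φ 0 = 0) (x : ∀ k, Fin (n k)) (k : ℕ) :
    HK φ (Set.univ : Set (∀ k, Fin (n k))) =
      Fintype.card (∀ j : Fin k, Fin (n j)) * HK φ (cylSet x k) := by
  have hk : (0 : ℝ) < 2 ^ (-(k : ℤ)) := by positivity
  simp_rw [HK_eq_iSup_HKContent φ _ hk, ENNReal.mul_iSup]
  exact iSup_congr fun ε => iSup_congr fun hε =>
    le_antisymm (HKContent_univ_le φ x hε.2) (card_mul_HKContent_le φ hφ0 x hε.1.le hε.2)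

end HausdorffContent

lemma card_prefix_eq_prod (k : ℕ) :
    (Fintype.card (∀ j : Fin k, Fin (n j)) : ℝ≥0∞) =
      ∏ j ∈ Finset.range k, (n j : ℝ≥0∞) := by
  simp [Fintype.card_pi, ← Fin.prod_univ_eq_prod_range]

lemma IsEquilibrium.measure_cylSet {μ : Measure (∀ k, Fin (n k))} (hμ : IsEquilibrium μ)
    (x : ∀ k, Fin (n k)) (k : ℕ) :
    μ (cylSet x k) = (Fintype.card (∀ j : Fin k, Fin (n j)) : ℝ≥0∞)⁻¹ := by
  rw [card_prefix_eq_prod,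
    ENNReal.prod_inv_distrib fun _ _ _ _ _ => Or.inr (ENNReal.natCast_ne_top _)]
  exact hμ k x

end CompactProduct

open CompactProduct

theorem stmt13_general (n : ℕ → ℕ) (μ : Measure (∀ k, Fin (n k)))
    (hμ : IsEquilibrium μ) (φ : ℝ → ℝ) (hφ : IsHausdorffFn φ) :
    ∀ (x : ∀ k, Fin (n k)) (r : ℝ), 0 < r →
      HK φ (BallK x r) = HK φ (Set.univ : Set (∀ k, Fin (n k))) * μ (BallK x r) := by
  intro x r hr
  obtain ⟨k, hball⟩ := exists_BallK_eq_cylSet x hr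
  rw [hball, HK_univ_eq_card_mul φ hφ.2.2.1 x k, hμ.measure_cylSet, mul_comm, ← mul_assoc,
    ENNReal.inv_mul_cancel (card_prefix_ne_zero x k) (ENNReal.natCast_ne_top _), one_mul]

/-- If the upper `φ`-density of the equilibrium state is a positive finite constant, then
for every ball `B` of positive radius, `H^φ(B) = H^φ(K) ⬝ μ(B)`. -/
theorem stmt13 (n : ℕ → ℕ) (hn : ∀ k, 0 < n k) (μ : Measure (∀ k, Fin (n k)))
    (hμ : IsEquilibrium μ) (φ : ℝ → ℝ) (hφ : IsHausdorffFn φ)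
    (D : ℝ≥0∞) (hD : ∀ x, upperDensK μ φ x = D) (hD0 : 0 < D) (hDtop : D < ⊤) :
    ∀ (x : ∀ k, Fin (n k)) (r : ℝ), 0 < r →
      HK φ (BallK x r) = HK φ (Set.univ : Set (∀ k, Fin (n k))) * μ (BallK x r) :=
  stmt13_general n μ hμ φ hφ
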